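/- If l = b_1 + ... + b_m where b_n are independent Bernoulli random variables with success probability r/(n-1+r), then P(l = j) = (Γ(r)/Γ(m+r)) |s(m,j)| r^j for j = 0, ..., m. That is, l follows the Chinese restaurant table distribution CRT(m,r). -/

import Mathlib

/-- Unsigned Stirling numbers of the first kind. -/
def stirling1 : ℕ → ℕ → ℕ
  | 0, 0 => 1
  | 0, _ + 1 => 0
  | _ + 1, 0 => 0
  | m + 1, j + 1 => stirling1 m j + m * stirling1 m (j + 1)

/-- `bernSumPMF r n` is the PMF of b₁ + ⋯ + bₙ with independent
bₖ ~ Bernoulli(r/(k-1+r)). -/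
noncomputable def bernSumPMF (r : ℝ) : ℕ → ℕ → ℝ
  | 0, j => if j = 0 then 1 else 0
  | n + 1, j =>
      bernSumPMF r n j * (1 - r / (n + r)) +
        (if j = 0 then 0 else bernSumPMF r n (j - 1) * (r / (n + r)))

/-!
Clearing the denominators `n + r` turns the convolution recursion of `bernSumPMF` into the
recursion `s(n+1, j) = s(n, j-1) + n s(n, j)` of the Stirling numbers, scaled by `r ^ j`: the
product `P(l = j) · r(r+1)⋯(r+m-1)` is `s(m, j) r ^ j`. The rising factorial is `Γ(m+r)/Γ(r)`.
-/

theorem Real.Gamma_add_nat_eq_mul_ascPochhammer_eval {r : ℝ} (hr : ∀ k : ℕ, r + k ≠ 0)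
    (n : ℕ) : Real.Gamma (r + n) = Real.Gamma r * (ascPochhammer ℝ n).eval r := by
  induction n with
  | zero => simp
  | succ n ih =>
    rw [ascPochhammer_succ_eval, Nat.cast_succ, ← add_assoc, Real.Gamma_add_one (hr n), ih]
    ring

theorem cast_stirling1_succ_succ (m j : ℕ) :
    (stirling1 (m + 1) (j + 1) : ℝ) = stirling1 m j + m * stirling1 m (j + 1) := by
  simp only [stirling1]
  push_cast
  ring

theorem natCast_mul_stirling1_zero (m : ℕ) : (m : ℝ) * stirling1 m 0 = 0 := by
  cases m <;> simp [stirling1]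

theorem bernSumPMF_mul_ascPochhammer_eval {r : ℝ} {m : ℕ}
    (hr : (ascPochhammer ℝ m).eval r ≠ 0) (j : ℕ) :
    bernSumPMF r m j * (ascPochhammer ℝ m).eval r = stirling1 m j * r ^ j := by
  induction m generalizing j with
  | zero => cases j <;> simp [bernSumPMF, stirling1]
  | succ m ih =>
    rw [ascPochhammer_succ_eval, mul_ne_zero_iff] at hr
    obtain ⟨hP, hrm⟩ := hr
    specialize ih hP
    have hmr : (m : ℝ) + r ≠ 0 := by rwa [add_comm]
    have hbern : 1 - r / (m + r) = m / (m + r) := by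
      field_simp
      ring
    rw [ascPochhammer_succ_eval]
    cases j with
    | zero =>
      simp only [bernSumPMF, if_pos, hbern, add_zero, pow_zero, mul_one]
      calc bernSumPMF r m 0 * (m / (m + r)) * ((ascPochhammer ℝ m).eval r * (r + m))
          = m * (bernSumPMF r m 0 * (ascPochhammer ℝ m).eval r) := by
            field_simp
            ring
        _ = stirling1 (m + 1) 0 := by
            rw [ih, pow_zero, mul_one, natCast_mul_stirling1_zero]
            simp [stirling1]
    | succ j =>
      simp only [bernSumPMF, if_neg (Nat.succ_ne_zero j), Nat.add_sub_cancel, hbern]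
      calc (bernSumPMF r m (j + 1) * (m / (m + r)) + bernSumPMF r m j * (r / (m + r)))
            * ((ascPochhammer ℝ m).eval r * (r + m))
          = m * (bernSumPMF r m (j + 1) * (ascPochhammer ℝ m).eval r)
            + r * (bernSumPMF r m j * (ascPochhammer ℝ m).eval r) := by
            field_simp
            ring
        _ = stirling1 (m + 1) (j + 1) * r ^ (j + 1) := by
            rw [ih, ih, cast_stirling1_succ_succ]
            ring

theorem bernoulli_sum_eq_crt_general (r : ℝ) (hr : 0 < r) (m : ℕ)
    (j : ℕ) :
    bernSumPMF r m j = Real.Gamma r / Real.Gamma (m + r) * stirling1 m j * r ^ j := by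
  have hP : 0 < (ascPochhammer ℝ m).eval r := ascPochhammer_pos m r hr
  have hΓ : Real.Gamma (m + r) = Real.Gamma r * (ascPochhammer ℝ m).eval r := by
    rw [add_comm]
    exact Real.Gamma_add_nat_eq_mul_ascPochhammer_eval (fun k => by positivity) m
  rw [hΓ, mul_assoc, ← bernSumPMF_mul_ascPochhammer_eval hP.ne' j]
  field_simp [(Real.Gamma_pos_of_pos hr).ne']

/-- The sum of independent Bernoulli(r/(n-1+r)) variables, n = 1,…,m, follows the
Chinese restaurant table distribution: P(l = j) = (Γ(r)/Γ(m+r)) |s(m,j)| r^j. -/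
theorem bernoulli_sum_eq_crt (r : ℝ) (hr : 0 < r) (m : ℕ) (hm : 0 < m)
    (j : ℕ) (hj : j ≤ m) :
    bernSumPMF r m j = Real.Gamma r / Real.Gamma (m + r) * stirling1 m j * r ^ j :=
  bernoulli_sum_eq_crt_general r hr m j
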